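/- Under the assumption p_ρ > 0, the six vectors l₁ = e₂, l₂ = e₃, l₃ = e₄, l₄ = e₅, l₅ = (p_ρ, ρ√p_ρ, 0, 0, p_η, 0), l₆ = (p_ρ, -ρ√p_ρ, 0, 0, p_η, 0) are linearly independent in ℝ⁶, and each lᵢ is a left eigenvector of the matrix A_x with the corresponding eigenvalue. -/
import Mathlib
set_option maxHeartbeats 2000000

private lemma cons_val_five' {α : Type*} (a : α) (f : Fin 5 → α) :
    Matrix.vecCons a f 5 = f 4 := rfl

/-- The six left eigenvectors of the matrix `A_x`, with eigenvalues
`u, u, u, u, u ± √p_ρ`, are eigenvectors and linearly independent in `ℝ⁶`. -/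
theorem extended_system_left_eigenvectors (u ρ pρ pη : ℝ) (hρ : 0 < ρ)
    (hpρ : 0 < pρ) :
    let A : Matrix (Fin 6) (Fin 6) ℝ :=
      !![u, ρ, 0, 0, 0, 0;
         pρ / ρ, u, 0, 0, pη / ρ, 0;
         0, 0, u, 0, 0, 0;
         0, 0, 0, u, 0, 0;
         0, 0, 0, 0, u, 0;
         0, 0, 0, 0, 0, u]
    let l : Fin 6 → (Fin 6 → ℝ) :=
      ![![0, 0, 1, 0, 0, 0],
        ![0, 0, 0, 1, 0, 0],
        ![0, 0, 0, 0, 1, 0],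
        ![0, 0, 0, 0, 0, 1],
        ![pρ, ρ * Real.sqrt pρ, 0, 0, pη, 0],
        ![pρ, -(ρ * Real.sqrt pρ), 0, 0, pη, 0]]
    let μ : Fin 6 → ℝ :=
      ![u, u, u, u, u + Real.sqrt pρ, u - Real.sqrt pρ]
    (∀ i : Fin 6, Matrix.vecMul (l i) A = μ i • l i) ∧
    LinearIndependent ℝ l := by
  intro A l μ
  have hρ' : ρ ≠ 0 := ne_of_gt hρ
  have hs : Real.sqrt pρ ≠ 0 := ne_of_gt (Real.sqrt_pos.2 hpρ)
  have hsq : Real.sqrt pρ * Real.sqrt pρ = pρ := Real.mul_self_sqrt hpρ.le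
  constructor
  · intro i
    fin_cases i <;>
      · funext j
        fin_cases j <;>
          · simp [A, l, μ, Matrix.vecMul, dotProduct, Fin.sum_univ_six,
              cons_val_five', Matrix.vecHead, Matrix.vecTail]
            try field_simp
            try ring_nf
            try nlinarith [hsq]
  · rw [Fintype.linearIndependent_iff]
    intro g hg
    have h0 := congrFun hg 0
    have h1 := congrFun hg 1
    have h2 := congrFun hg 2
    have h3 := congrFun hg 3
    have h4 := congrFun hg 4
    have h5 := congrFun hg 5
    simp [l, Fin.sum_univ_six, cons_val_five', Matrix.vecHead, Matrix.vecTail] at h0 h1 h2 h3 h4 h5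
    clear hg
    have hrs : (0:ℝ) < ρ * Real.sqrt pρ := mul_pos hρ (Real.sqrt_pos.2 hpρ)
    have e1 : g 4 + g 5 = 0 := by nlinarith [hpρ, h0, sq_nonneg (g 4 + g 5)]
    have e2 : g 4 - g 5 = 0 := by nlinarith [hrs, h1, sq_nonneg (g 4 - g 5)]
    have g4 : g 4 = 0 := by linarith
    have g5 : g 5 = 0 := by linarith
    intro i
    fin_cases i <;> simp_all <;> linarith
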